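/- Let A be a weakly noetherian B₁-algebra. Then the set of minimal prime ideals of A (prime ideals minimal with respect to inclusion among all prime ideals of A) is finite. -/

import Mathlib

/-- An ideal `I` of a `B₁`-algebra is *saturated* if `y ∈ I` and `x + y = y` imply `x ∈ I`. -/
def IsSaturated {A : Type*} [CommSemiring A] (I : Ideal A) : Prop :=
  ∀ x y : A, y ∈ I → x + y = y → x ∈ I

/-- `A` is *weakly noetherian* if every ascending chain of saturated ideals is eventually
stationary. -/
def WeaklyNoetherian (A : Type*) [CommSemiring A] : Prop :=
  ∀ f : ℕ → Ideal A, (∀ n, IsSaturated (f n)) → (∀ n, f n ≤ f (n + 1)) →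
    ∃ N, ∀ n, N ≤ n → f n = f N

/-!
Saturated ideals are the closed elements of a closure operator `sat` on ideals, and this closure
satisfies `sat I * sat J ≤ sat (I * J)`. By noetherian induction on saturated ideals, every
saturated ideal `M` contains a finite product of primes: otherwise take a maximal counterexample
`M`; it is neither `⊤` nor prime, so some `a b ∉ M` have `a * b ∈ M`, and then
`sat (M ⊔ (a)) * sat (M ⊔ (b)) ≤ sat M = M` with both factors strictly above `M`. Applied to the
saturated ideal `⊥`, this gives primes `P₁, …, Pₙ` with `P₁ ⋯ Pₙ = 0`, and every minimal prime
is one of them.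
-/

section

variable {A : Type*} [CommSemiring A]

theorem isSaturated_bot : IsSaturated (⊥ : Ideal A) := by
  intro x y hy hxy
  rw [Ideal.mem_bot] at hy ⊢
  rwa [hy, add_zero] at hxy

theorem isSaturated_sInf {S : Set (Ideal A)} (hS : ∀ I ∈ S, IsSaturated I) :
    IsSaturated (sInf S) := by
  intro x y hy hxy
  rw [Submodule.mem_sInf] at hy ⊢
  exact fun I hI => hS I hI x y (hy I hI) hxy

theorem IsSaturated.colon {K : Ideal A} (hK : IsSaturated K) (S : Set A) :
    IsSaturated (K.colon S) := by
  intro x y hy hxy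
  rw [Submodule.mem_colon] at hy ⊢
  intro s hs
  exact hK (x * s) (y * s) (hy s hs) (by rw [← add_mul, hxy])

def saturation : ClosureOperator (Ideal A) :=
  .ofCompletePred IsSaturated fun _ => isSaturated_sInf

theorem saturation_isClosed_iff {I : Ideal A} : saturation.IsClosed I ↔ IsSaturated I := Iff.rfl

theorem saturation_mul_saturation_le (I J : Ideal A) :
    saturation I * saturation J ≤ saturation (I * J) := by
  set K := saturation (I * J)
  -- Colon ideals of a saturated ideal are saturated, so the factors can be saturated one at a time.
  have hK : IsSaturated K := saturation.isClosed_closure _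
  have hJ : ∀ x ∈ I, saturation J ≤ K.colon {x} := fun x hx =>
    saturation.closure_min
      (fun y hy => Submodule.mem_colon_singleton.2 <| by
        rw [smul_eq_mul, mul_comm]
        exact saturation.le_closure _ (Ideal.mul_mem_mul hx hy))
      (hK.colon _)
  have hI : saturation I ≤ K.colon (saturation J) :=
    saturation.closure_min
      (fun x hx => Submodule.mem_colon.2 fun y hy => by
        rw [smul_eq_mul, mul_comm]
        exact Submodule.mem_colon_singleton.1 (hJ x hx hy))
      (hK.colon _)
  exact Ideal.mul_le.2 fun x hx y hy => Submodule.mem_colon.1 (hI hx) y hy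

theorem WeaklyNoetherian.wellFoundedGT (h : WeaklyNoetherian A) :
    WellFoundedGT {I : Ideal A // IsSaturated I} := by
  rw [wellFoundedGT_iff_monotone_chain_condition]
  intro a
  obtain ⟨N, hN⟩ := h (fun n => (a n).1) (fun n => (a n).2) (fun n => a.monotone n.le_succ)
  exact ⟨N, fun m hm => Subtype.ext (hN m hm).symm⟩

theorem sup_span_mul_sup_span_le {M : Ideal A} {a b : A} (hab : a * b ∈ M) :
    (M ⊔ Ideal.span {a}) * (M ⊔ Ideal.span {b}) ≤ M := by
  rw [Ideal.sup_mul, Ideal.mul_sup, Ideal.mul_sup, Ideal.span_singleton_mul_span_singleton]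
  exact sup_le (sup_le Ideal.mul_le_left Ideal.mul_le_left)
    (sup_le Ideal.mul_le_right ((Ideal.span_singleton_le_iff_mem M).2 hab))

def ContainsPrimeProduct (I : Ideal A) : Prop :=
  ∃ s : Multiset (Ideal A), (∀ P ∈ s, P.IsPrime) ∧ s.prod ≤ I

namespace ContainsPrimeProduct

theorem top : ContainsPrimeProduct (⊤ : Ideal A) :=
  ⟨0, by simp, le_top⟩

theorem of_isPrime {P : Ideal A} (hP : P.IsPrime) : ContainsPrimeProduct P :=
  ⟨{P}, by simpa using hP, by simp⟩

theorem mul {I J : Ideal A} (hI : ContainsPrimeProduct I) (hJ : ContainsPrimeProduct J) :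
    ContainsPrimeProduct (I * J) := by
  obtain ⟨s, hs, hsI⟩ := hI
  obtain ⟨t, ht, htJ⟩ := hJ
  refine ⟨s + t, fun P hP => ?_, ?_⟩
  · rcases Multiset.mem_add.1 hP with h | h
    exacts [hs P h, ht P h]
  · rw [Multiset.prod_add]
    exact mul_le_mul' hsI htJ

theorem mono {I J : Ideal A} (hI : ContainsPrimeProduct I) (hIJ : I ≤ J) :
    ContainsPrimeProduct J :=
  let ⟨s, hs, hsI⟩ := hI
  ⟨s, hs, hsI.trans hIJ⟩

theorem of_forall_lt {M : Ideal A} (hM : IsSaturated M)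
    (ih : ∀ J, IsSaturated J → M < J → ContainsPrimeProduct J) : ContainsPrimeProduct M := by
  by_cases hMtop : M = ⊤
  · exact hMtop ▸ top
  by_cases hMprime : M.IsPrime
  · exact of_isPrime hMprime
  obtain ⟨a, b, hab, haM, hbM⟩ : ∃ a b, a * b ∈ M ∧ a ∉ M ∧ b ∉ M := by
    simpa [Ideal.isPrime_iff, hMtop, not_or] using hMprime
  have enlarge : ∀ c ∉ M, ContainsPrimeProduct (saturation (M ⊔ Ideal.span {c})) := by
    intro c hc
    have hle : M ≤ saturation (M ⊔ Ideal.span {c}) := le_sup_left.trans (saturation.le_closure _)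
    have hcmem : c ∈ saturation (M ⊔ Ideal.span {c}) :=
      saturation.le_closure _ (Ideal.mem_sup_right (Ideal.mem_span_singleton_self c))
    exact ih _ (saturation.isClosed_closure _) (SetLike.lt_iff_le_and_exists.2 ⟨hle, c, hcmem, hc⟩)
  refine ((enlarge a haM).mul (enlarge b hbM)).mono ?_
  calc saturation (M ⊔ Ideal.span {a}) * saturation (M ⊔ Ideal.span {b})
      ≤ saturation ((M ⊔ Ideal.span {a}) * (M ⊔ Ideal.span {b})) :=
        saturation_mul_saturation_le _ _
    _ ≤ saturation M := saturation.monotone (sup_span_mul_sup_span_le hab)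
    _ = M := saturation_isClosed_iff.2 hM |>.closure_eq

end ContainsPrimeProduct

theorem WeaklyNoetherian.containsPrimeProduct (hwn : WeaklyNoetherian A) {I : Ideal A}
    (hI : IsSaturated I) : ContainsPrimeProduct I := by
  have := hwn.wellFoundedGT
  suffices ∀ M : {I : Ideal A // IsSaturated I}, ContainsPrimeProduct M.1 from this ⟨I, hI⟩
  intro M
  induction M using WellFoundedGT.induction with
  | _ M ih => exact .of_forall_lt M.2 fun J hJ hMJ => ih ⟨J, hJ⟩ hMJ

end

theorem minimal_primes_finite_general {A : Type*} [CommSemiring A]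
    (hwn : WeaklyNoetherian A) :
    {P : Ideal A | P.IsPrime ∧ ∀ Q : Ideal A, Q.IsPrime → Q ≤ P → Q = P}.Finite := by
  obtain ⟨s, hs, hs_bot⟩ := hwn.containsPrimeProduct isSaturated_bot
  refine s.toFinset.finite_toSet.subset ?_
  rintro P ⟨hP, hmin⟩
  obtain ⟨Q, hQs, hQP⟩ := hP.multiset_prod_le.1 (hs_bot.trans bot_le)
  rw [← hmin Q (hs Q hQs) hQP]
  simpa using hQs

/-- A weakly noetherian `B₁`-algebra has only finitely many minimal prime ideals. -/
theorem minimal_primes_finite {A : Type*} [CommSemiring A]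
    (hchar : (1 : A) + 1 = 1) (hwn : WeaklyNoetherian A) :
    {P : Ideal A | P.IsPrime ∧ ∀ Q : Ideal A, Q.IsPrime → Q ≤ P → Q = P}.Finite :=
  minimal_primes_finite_general hwn
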